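/- For a Hermitian positive semi-definite matrix S and Hermitian positive definite matrices R₁ ⪯ R₂, we have log det(I + S R₂^{-1}) ≤ log det(I + S R₁^{-1}); i.e., the achievable rate log det(I + S R^{-1}) is monotonically decreasing in the interference-plus-noise covariance R under the Loewner order. -/

import Mathlib

open Matrix ComplexOrder

/-!
Write `S = Bᴴ B`. Sylvester's determinant identity gives `det (1 + S R⁻¹) = det (1 + B R⁻¹ Bᴴ)`,
and the inverse is operator antitone, so `1 ≤ 1 + B R₂⁻¹ Bᴴ ≤ 1 + B R₁⁻¹ Bᴴ` in the Loewner order.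
The determinant is monotone on positive definite matrices: if `Y - X = Cᴴ C` then
`Y = (1 + Cᴴ C X⁻¹) X`, and by Sylvester again `det (1 + Cᴴ C X⁻¹) = det (1 + C X⁻¹ Cᴴ) ≥ 1`,
the eigenvalues of `1 + P` being `≥ 1` for `P ⪰ 0`.
-/

namespace Matrix

variable {n 𝕜 : Type*} [Fintype n] [DecidableEq n] [RCLike 𝕜]

open scoped MatrixOrder Matrix.Norms.L2Operator in
theorem PosDef.posSemidef_inv_sub_inv {A B : Matrix n n ℂ} (hA : A.PosDef)
    (hAB : (B - A).PosSemidef) : (A⁻¹ - B⁻¹).PosSemidef := by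
  have := CStarAlgebra.ringInverse_le_ringInverse (a := A) (b := B) hAB hA.isStrictlyPositive
  rwa [← nonsing_inv_eq_ringInverse, ← nonsing_inv_eq_ringInverse] at this

open scoped MatrixOrder in
theorem PosSemidef.exists_eq_conjTranspose_mul_self {A : Matrix n n 𝕜} (hA : A.PosSemidef) :
    ∃ B : Matrix n n 𝕜, A = Bᴴ * B := by
  refine ⟨CFC.sqrt A, ?_⟩
  rw [(CFC.sqrt_nonneg A).posSemidef.isHermitian.eq, CFC.sqrt_mul_sqrt_self A hA.nonneg]

theorem PosSemidef.one_le_det_one_add {A : Matrix n n 𝕜} (hA : A.PosSemidef) :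
    1 ≤ (1 + A).det := by
  have hH := hA.isHermitian
  rw [hH.spectral_theorem, ← map_one (Unitary.conjStarAlgAut 𝕜 _ hH.eigenvectorUnitary),
    ← map_add, Unitary.conjStarAlgAut_apply, det_mul, det_mul, mul_right_comm, ← det_mul,
    ← Unitary.coe_star, Unitary.coe_mul_star_self, det_one, one_mul, ← diagonal_one,
    diagonal_add, det_diagonal]
  exact Finset.one_le_prod fun i _ => by simpa using hA.eigenvalues_nonneg i

theorem det_one_add_conjTranspose_mul_self_mul {m : Type*} [Fintype m] [DecidableEq m]
    (B : Matrix m n 𝕜) (X : Matrix n n 𝕜) :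
    (1 + Bᴴ * B * X).det = (1 + B * X * Bᴴ).det := by
  rw [Matrix.mul_assoc, det_one_add_mul_comm, Matrix.mul_assoc]

theorem PosDef.det_le_det_of_posSemidef_sub {A B : Matrix n n 𝕜} (hA : A.PosDef)
    (hAB : (B - A).PosSemidef) : A.det ≤ B.det := by
  obtain ⟨C, hC⟩ := hAB.exists_eq_conjTranspose_mul_self
  have hB : B = (1 + Cᴴ * C * A⁻¹) * A := by
    rw [Matrix.add_mul, Matrix.one_mul, Matrix.mul_assoc,
      nonsing_inv_mul _ ((isUnit_iff_isUnit_det A).mp hA.isUnit), Matrix.mul_one, ← hC,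
      add_sub_cancel]
  calc A.det ≤ (1 + C * A⁻¹ * Cᴴ).det * A.det :=
        le_mul_of_one_le_left hA.det_pos.le
          (hA.inv.posSemidef.mul_mul_conjTranspose_same C).one_le_det_one_add
    _ = B.det := by rw [hB, det_mul, det_one_add_conjTranspose_mul_self_mul]

end Matrix

/-- For Hermitian PSD `S` and Hermitian positive definite `R₁ ⪯ R₂`,
`det (I + S R₂⁻¹) ≤ det (I + S R₁⁻¹)`: the rate `log det (I + S R⁻¹)` is
monotonically decreasing in the interference-plus-noise covariance `R`. -/
theorem stmt9 {M : ℕ} (S R₁ R₂ : Matrix (Fin M) (Fin M) ℂ)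
    (hS : S.PosSemidef) (hR₁ : R₁.PosDef) (hR₂ : R₂.PosDef)
    (hle : (R₂ - R₁).PosSemidef) :
    (1 + S * R₂⁻¹).det.re ≤ (1 + S * R₁⁻¹).det.re := by
  obtain ⟨B, rfl⟩ := hS.exists_eq_conjTranspose_mul_self
  rw [det_one_add_conjTranspose_mul_self_mul, det_one_add_conjTranspose_mul_self_mul]
  have hpos : (1 + B * R₂⁻¹ * Bᴴ).PosDef :=
    PosDef.one.add_posSemidef (hR₂.inv.posSemidef.mul_mul_conjTranspose_same B)
  have hsub : ((1 + B * R₁⁻¹ * Bᴴ) - (1 + B * R₂⁻¹ * Bᴴ)).PosSemidef := by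
    rw [add_sub_add_left_eq_sub, ← Matrix.sub_mul, ← Matrix.mul_sub]
    exact (hR₁.posSemidef_inv_sub_inv hle).mul_mul_conjTranspose_same B
  exact (Complex.le_def.mp (hpos.det_le_det_of_posSemidef_sub hsub)).1
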